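/- arXiv:1107.1218 — 2 statements merged into one kernel-verified Lean document; each statement's English description precedes it below -/
import Mathlib

section
/- A proper metric space X has asymptotic dimension 0 if and only if for every C > 0 the diameters of all C-chains in X are bounded from above, where a C-chain is a finite sequence x₁,…,x_k with d(x_i, x_{i+1}) ≤ C for all i. -/
/-!
If the members of a `C`-disjoint cover have diameter at most `M`, a `C`-chain can never leave the
member containing its first point, so `C`-chains have diameter at most `M`. Conversely, the
equivalence classes of "joined by a `D`-chain" cover the space, are `D`-disjoint by construction,
and are uniformly bounded precisely because `D`-chains are.
-/

open Set

theorem Relation.ReflTransGen.exists_fin_chain {α : Type*} {r : α → α → Prop} {a b : α}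
    (h : Relation.ReflTransGen r a b) :
    ∃ k : ℕ, ∃ x : Fin (k + 1) → α, x 0 = a ∧ x (Fin.last k) = b ∧
      ∀ i : Fin k, r (x i.castSucc) (x i.succ) := by
  induction h using Relation.ReflTransGen.head_induction_on with
  | refl => exact ⟨0, fun _ => b, rfl, rfl, Fin.elim0⟩
  | head hac _ ih =>
    obtain ⟨k, x, hx0, hxl, hx⟩ := ih
    refine ⟨k + 1, Fin.cons _ x, rfl, by rw [Fin.cons_last, hxl], Fin.cases ?_ fun i => ?_⟩
    · simpa [hx0] using hac
    · simpa [← Fin.succ_castSucc] using hx i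

namespace Metric

variable {X : Type*} [PseudoMetricSpace X]

theorem chain_mem_of_disjoint_cover {𝒰 : Set (Set X)} {C : ℝ} (hcov : ⋃₀ 𝒰 = univ)
    (hdisj : ∀ U ∈ 𝒰, ∀ V ∈ 𝒰, U ≠ V → ∀ a ∈ U, ∀ b ∈ V, dist a b > C)
    {k : ℕ} {x : Fin (k + 1) → X} (hx : ∀ i : Fin k, dist (x i.castSucc) (x i.succ) ≤ C)
    {U : Set X} (hU : U ∈ 𝒰) (hx0 : x 0 ∈ U) (i : Fin (k + 1)) : x i ∈ U := by
  induction i using Fin.induction with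
  | zero => exact hx0
  | succ i hi =>
    obtain ⟨V, hV, hxV⟩ := mem_sUnion.mp (hcov.symm ▸ mem_univ (x i.succ))
    obtain rfl : V = U := by
      by_contra hVU
      exact (hdisj V hV U hU hVU _ hxV _ hi).not_ge (dist_comm (x i.succ) _ ▸ hx i)
    exact hxV

theorem chain_dist_le_of_disjoint_cover {𝒰 : Set (Set X)} {C M : ℝ} (hcov : ⋃₀ 𝒰 = univ)
    (hM : ∀ U ∈ 𝒰, ∀ a ∈ U, ∀ b ∈ U, dist a b ≤ M)
    (hdisj : ∀ U ∈ 𝒰, ∀ V ∈ 𝒰, U ≠ V → ∀ a ∈ U, ∀ b ∈ V, dist a b > C)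
    {k : ℕ} {x : Fin (k + 1) → X} (hx : ∀ i : Fin k, dist (x i.castSucc) (x i.succ) ≤ C)
    (i j : Fin (k + 1)) : dist (x i) (x j) ≤ M := by
  obtain ⟨U, hU, hx0⟩ := mem_sUnion.mp (hcov.symm ▸ mem_univ (x 0))
  exact hM U hU _ (chain_mem_of_disjoint_cover hcov hdisj hx hU hx0 i)
    _ (chain_mem_of_disjoint_cover hcov hdisj hx hU hx0 j)

variable (X) in
def chainSetoid (C : ℝ) : Setoid X where
  r := Relation.ReflTransGen fun a b => dist a b ≤ C
  iseqv :=
    { refl := fun _ => .refl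
      symm := fun h => Relation.reflTransGen_swap.mp <| by
        simpa only [Function.swap_def, dist_comm] using h
      trans := .trans }

theorem chainSetoid_of_dist_le {C : ℝ} {a b : X} (h : dist a b ≤ C) : chainSetoid X C a b :=
  .single h

theorem dist_le_of_chainSetoid {C M : ℝ}
    (hM : ∀ k : ℕ, ∀ x : Fin (k + 1) → X,
      (∀ i : Fin k, dist (x i.castSucc) (x i.succ) ≤ C) → ∀ i j, dist (x i) (x j) ≤ M)
    {a b : X} (h : chainSetoid X C a b) : dist a b ≤ M := by
  obtain ⟨k, x, rfl, rfl, hx⟩ := Relation.ReflTransGen.exists_fin_chain h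
  exact hM k x hx 0 (Fin.last k)

theorem classes_chainSetoid_disjoint {C : ℝ} :
    ∀ U ∈ (chainSetoid X C).classes, ∀ V ∈ (chainSetoid X C).classes, U ≠ V →
      ∀ a ∈ U, ∀ b ∈ V, dist a b > C := by
  rintro U hU V ⟨y, rfl⟩ hUV a ha b hb
  by_contra! hab
  exact hUV <| Setoid.eq_of_mem_classes hU ha (Setoid.mem_classes _ y)
    ((chainSetoid_of_dist_le hab).trans hb)

end Metric

open Metric in
theorem asdim_zero_iff_chains_bounded_general {X : Type*} [MetricSpace X] :
    (∀ D > (0 : ℝ), ∃ 𝒰 : Set (Set X),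
      (⋃₀ 𝒰 = Set.univ) ∧
      (∃ M : ℝ, ∀ U ∈ 𝒰, ∀ a ∈ U, ∀ b ∈ U, dist a b ≤ M) ∧
      (∀ U ∈ 𝒰, ∀ V ∈ 𝒰, U ≠ V → ∀ a ∈ U, ∀ b ∈ V, dist a b > D)) ↔
    (∀ C > (0 : ℝ), ∃ M : ℝ, ∀ k : ℕ, ∀ x : Fin (k + 1) → X,
      (∀ i : Fin k, dist (x i.castSucc) (x i.succ) ≤ C) →
      ∀ i j : Fin (k + 1), dist (x i) (x j) ≤ M) := by
  constructor
  · intro h C hC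
    obtain ⟨𝒰, hcov, ⟨M, hM⟩, hdisj⟩ := h C hC
    exact ⟨M, fun k x hx => chain_dist_le_of_disjoint_cover hcov hM hdisj hx⟩
  · intro h D hD
    obtain ⟨M, hM⟩ := h D hD
    refine ⟨(chainSetoid X D).classes, Setoid.sUnion_classes _, ⟨M, ?_⟩,
      classes_chainSetoid_disjoint⟩
    rintro U ⟨y, rfl⟩ a ha b hb
    exact dist_le_of_chainSetoid hM ((chainSetoid X D).trans ha ((chainSetoid X D).symm hb))

/-- A proper metric space has asymptotic dimension `0` (for every `D > 0` there is a
uniformly bounded `D`-disjoint cover) if and only if for every `C > 0` the diameters of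
all `C`-chains are uniformly bounded from above. -/
theorem asdim_zero_iff_chains_bounded {X : Type*} [MetricSpace X] [ProperSpace X] :
    (∀ D > (0 : ℝ), ∃ 𝒰 : Set (Set X),
      (⋃₀ 𝒰 = Set.univ) ∧
      (∃ M : ℝ, ∀ U ∈ 𝒰, ∀ a ∈ U, ∀ b ∈ U, dist a b ≤ M) ∧
      (∀ U ∈ 𝒰, ∀ V ∈ 𝒰, U ≠ V → ∀ a ∈ U, ∀ b ∈ V, dist a b > D)) ↔
    (∀ C > (0 : ℝ), ∃ M : ℝ, ∀ k : ℕ, ∀ x : Fin (k + 1) → X,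
      (∀ i : Fin k, dist (x i.castSucc) (x i.succ) ≤ C) →
      ∀ i j : Fin (k + 1), dist (x i) (x j) ≤ M) :=
  asdim_zero_iff_chains_bounded_general
end

section
/- In the graph metric d_{n,k} on V(G_{n,k}), defined as the infimum over paths (x₀,…,x_l) in G_{n,k} of Σ‖x_{i−1}−x_i‖_∞, any two vertices are connected by a path, so d_{n,k} is a well-defined metric on V(G_{n,k}) (i.e., G_{n,k} is connected). -/
/-!
Two points of the inner cube `{±k}ⁿ` that differ in a single coordinate are at Euclidean
distance `2k`, hence adjacent, so the inner cube is connected by flipping coordinates one at a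
time. Every vertex of the outer cube `{±2k}ⁿ` is adjacent to its half, which lies in the inner
cube.
-/

/-- The vertex set of the graph `G_{n,k}`: points of `ℝⁿ` all of whose coordinates have
absolute value `k`, together with points all of whose coordinates have absolute value `2k`. -/
def graphVertices (n k : ℕ) : Set (EuclideanSpace ℝ (Fin n)) :=
  {x | (∀ i, |x i| = (k : ℝ)) ∨ (∀ i, |x i| = 2 * (k : ℝ))}

/-- The edge relation of `G_{n,k}`: two vertices are adjacent iff their Euclidean distance
is `2k`, or one is twice the other. -/
def graphEdge (n k : ℕ) (x y : EuclideanSpace ℝ (Fin n)) : Prop :=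
  x ∈ graphVertices n k ∧ y ∈ graphVertices n k ∧
    (‖x - y‖ = 2 * (k : ℝ) ∨ y = (2 : ℝ) • x ∨ x = (2 : ℝ) • y)

open Relation

lemma abs_sub_eq_two_mul_of_abs_eq {α : Type*} [Ring α] [LinearOrder α] [IsOrderedRing α]
    {a b c : α} (ha : |a| = c) (hb : |b| = c) (hab : a ≠ b) : |a - b| = 2 * c := by
  obtain rfl | rfl := abs_eq_abs.mp (ha.trans hb.symm)
  · exact absurd rfl hab
  · rw [show -b - b = -(2 * b) by noncomm_ring, abs_neg, abs_mul, abs_two, hb]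

section

variable {n k : ℕ}

lemma graphEdge_symm {x y : EuclideanSpace ℝ (Fin n)} :
    graphEdge n k x y → graphEdge n k y x := by
  rintro ⟨hx, hy, hdist | hyx | hxy⟩
  · exact ⟨hy, hx, Or.inl (by rwa [norm_sub_rev])⟩
  · exact ⟨hy, hx, Or.inr (Or.inr hyx)⟩
  · exact ⟨hy, hx, Or.inr (Or.inl hxy)⟩

instance : Std.Symm (graphEdge n k) := ⟨fun _ _ => graphEdge_symm⟩

lemma abs_add_single_apply_eq {x : EuclideanSpace ℝ (Fin n)} (hx : ∀ j, |x j| = k)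
    {i : Fin n} {b : ℝ} (hb : |b| = k) (j : Fin n) :
    |(x + EuclideanSpace.single i (b - x i)) j| = k := by
  rcases eq_or_ne j i with rfl | hji
  · simpa using hb
  · simpa [PiLp.single_apply, hji] using hx j

lemma graphEdge_add_single {x : EuclideanSpace ℝ (Fin n)} (hx : ∀ j, |x j| = k)
    {i : Fin n} {b : ℝ} (hb : |b| = k) (hne : x i ≠ b) :
    graphEdge n k x (x + EuclideanSpace.single i (b - x i)) := by
  refine ⟨Or.inl hx, Or.inl (abs_add_single_apply_eq hx hb), Or.inl ?_⟩
  rw [sub_add_cancel_left, norm_neg, PiLp.norm_single, Real.norm_eq_abs, abs_sub_comm]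
  exact abs_sub_eq_two_mul_of_abs_eq (hx i) hb hne

lemma reflTransGen_graphEdge_of_abs_eq {x y : EuclideanSpace ℝ (Fin n)}
    (hx : ∀ i, |x i| = k) (hy : ∀ i, |y i| = k) : ReflTransGen (graphEdge n k) x y := by
  suffices h : ∀ s : Finset (Fin n), ∀ x : EuclideanSpace ℝ (Fin n), (∀ i, |x i| = k) →
      (∀ i ∉ s, x i = y i) → ReflTransGen (graphEdge n k) x y from
    h Finset.univ x hx (by simp)
  intro s
  induction s using Finset.induction_on with
  | empty =>
    intro x _ hxy
    rw [PiLp.ext fun i => hxy i (Finset.notMem_empty i)]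
  | insert i s _ ih =>
    intro x hx hxy
    by_cases hxyi : x i = y i
    · refine ih x hx fun j hj => ?_
      rcases eq_or_ne j i with rfl | hji
      · exact hxyi
      · exact hxy j (by simp [hji, hj])
    · refine .head (graphEdge_add_single hx (hy i) hxyi)
        (ih _ (abs_add_single_apply_eq hx (hy i)) fun j hj => ?_)
      rcases eq_or_ne j i with rfl | hji
      · simp
      · simpa [PiLp.single_apply, hji] using hxy j (by simp [hji, hj])

lemma exists_abs_eq_reflTransGen_graphEdge {x : EuclideanSpace ℝ (Fin n)}
    (hx : x ∈ graphVertices n k) :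
    ∃ x' : EuclideanSpace ℝ (Fin n), (∀ i, |x' i| = k) ∧ ReflTransGen (graphEdge n k) x' x := by
  rcases hx with hx | hx
  · exact ⟨x, hx, .refl⟩
  · have hhalf : ∀ i, |((2 : ℝ)⁻¹ • x) i| = k := fun i => by
      rw [PiLp.smul_apply, smul_eq_mul, abs_mul, hx i, abs_of_pos (by norm_num)]
      ring
    refine ⟨(2 : ℝ)⁻¹ • x, hhalf, .single ⟨Or.inl hhalf, Or.inr hx, Or.inr (Or.inl ?_)⟩⟩
    rw [smul_smul, mul_inv_cancel₀ two_ne_zero, one_smul]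

end

theorem graph_connected_general (n k : ℕ) :
    ∀ x ∈ graphVertices n k, ∀ y ∈ graphVertices n k,
      Relation.ReflTransGen (graphEdge n k) x y := by
  intro x hx y hy
  obtain ⟨x', hx', hx'x⟩ := exists_abs_eq_reflTransGen_graphEdge hx
  obtain ⟨y', hy', hy'y⟩ := exists_abs_eq_reflTransGen_graphEdge hy
  exact (symm hx'x).trans ((reflTransGen_graphEdge_of_abs_eq hx' hy').trans hy'y)

/-- The graph `G_{n,k}` is connected (for `n ≥ 2`, `k ≥ 1`): any two vertices are joined
by a path, so the path metric `d_{n,k}` is a well-defined metric on `V(G_{n,k})`. -/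
theorem graph_connected (n k : ℕ) (hn : 2 ≤ n) (hk : 1 ≤ k) :
    ∀ x ∈ graphVertices n k, ∀ y ∈ graphVertices n k,
      Relation.ReflTransGen (graphEdge n k) x y :=
  graph_connected_general n k
end
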